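/- Let $\lambda>0$ and let $\psi:[0,\infty)\to\mathbb{R}$ be measurable with $\int_1^\infty s^\beta|\psi(s)|ds<\infty$ for some $\beta>2\lambda$, $\int_0^1|\psi(s)|ds<\infty$, and $\int_0^\infty s^j\psi(s)ds=0$ for all even integers $0\le j\le 2[\lambda]$. Then the function $B_{\lambda+1}\psi(u)=\frac{2}{\Gamma(\lambda+1)}\int_0^{\sqrt u}\psi(v)(u-v^2)^{\lambda}dv$ satisfies $\int_0^\infty u^{-1}|B_{\lambda+1}\psi(u)|\,du<\infty$. -/

import Mathlib

/-!
Write `F u = ∫_{v > 0} ψ v * (u - v²)₊ ^ λ`, so that `B_{λ+1} ψ = 2 F / Γ(λ+1)`. Since the kernel is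
at most `u ^ λ`, `|F u| = O(u ^ λ)`, which is integrable against `du / u` near `0`. Near `∞`, the
moment conditions let one subtract from the kernel `u ^ λ p(v² / u)`, where `p` is the Taylor
polynomial of degree `m = ⌊λ⌋` of `s ↦ (1 - s) ^ λ` at `0`. Since
`(1 - s)₊ ^ λ - p(s) = O(s ^ γ)` on all of `[0, ∞)` for any `γ ∈ [m, m + 1]`, this gives
`|F u| = O(u ^ (λ - γ))` as soon as `∫ v ^ (2γ) |ψ v| < ∞`; the choice `γ = λ + η` with
`η = min (m + 1 - λ) (β / 2 - λ) > 0` makes this `O(u ^ (-η))`.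
-/

open MeasureTheory Real

/-- The modified fractional integral `B_δ ψ`. -/
noncomputable def fracB (δ : ℝ) (ψ : ℝ → ℝ) (u : ℝ) : ℝ :=
  (2 / Real.Gamma δ) * ∫ v in (0:ℝ)..(Real.sqrt u), ψ v * (u - v^2) ^ (δ - 1)

open Set

theorem exists_abs_one_sub_rpow_sub_sum_le (lam : ℝ) (m : ℕ) :
    ∃ (c : ℕ → ℝ) (C : ℝ), ∀ s ∈ Icc (0 : ℝ) (1 / 2),
      |(1 - s) ^ lam - ∑ k ∈ Finset.range (m + 1), c k * s ^ k| ≤ C * s ^ (m + 1) := by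
  set f : ℝ → ℝ := fun s => (1 - s) ^ lam
  have hf : ContDiffOn ℝ (m + 1) f (Icc 0 (1 / 2)) :=
    (contDiffOn_const.sub contDiffOn_id).rpow_const_of_ne fun s hs => by
      simp only [id]; linarith [hs.2]
  obtain ⟨C, hC⟩ := exists_taylor_mean_remainder_bound (by norm_num) hf
  set c : ℕ → ℝ := fun k => (k.factorial : ℝ)⁻¹ * iteratedDerivWithin k f (Icc 0 (1 / 2)) 0
  refine ⟨c, C, fun s hs => ?_⟩
  have htaylor : taylorWithinEval f m (Icc 0 (1 / 2)) 0 s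
      = ∑ k ∈ Finset.range (m + 1), c k * s ^ k := by
    rw [taylor_within_apply]
    refine Finset.sum_congr rfl fun k _ => ?_
    rw [sub_zero, smul_eq_mul]; ring
  rw [← htaylor]
  simpa only [Real.norm_eq_abs, sub_zero] using hC s hs

theorem pow_le_two_mul_rpow {s γ : ℝ} {k : ℕ} (hs : 1 / 2 ≤ s) (hkγ : (k : ℝ) ≤ γ) :
    s ^ k ≤ (2 * s) ^ γ :=
  calc s ^ k ≤ (2 * s) ^ k := pow_le_pow_left₀ (by linarith) (by linarith) k
    _ = (2 * s) ^ (k : ℝ) := (Real.rpow_natCast _ k).symm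
    _ ≤ (2 * s) ^ γ := Real.rpow_le_rpow_of_exponent_le (by linarith) hkγ

theorem exists_abs_max_one_sub_rpow_sub_sum_le {lam γ : ℝ} {m : ℕ} (hlam : 0 ≤ lam)
    (hmγ : (m : ℝ) ≤ γ) (hγm : γ ≤ m + 1) :
    ∃ (c : ℕ → ℝ) (C : ℝ), ∀ s, 0 ≤ s →
      |max (1 - s) 0 ^ lam - ∑ k ∈ Finset.range (m + 1), c k * s ^ k| ≤ C * s ^ γ := by
  obtain ⟨c, C₁, hC₁⟩ := exists_abs_one_sub_rpow_sub_sum_le lam m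
  set C₂ := (1 + ∑ k ∈ Finset.range (m + 1), |c k|) * 2 ^ γ
  have hγ : 0 ≤ γ := (Nat.cast_nonneg m).trans hmγ
  refine ⟨c, max C₁ C₂, fun s hs => ?_⟩
  rcases le_or_gt s (1 / 2) with hs2 | hs2
  · have hpow : s ^ (m + 1) ≤ s ^ γ := by
      rw [← Real.rpow_natCast]; push_cast
      exact Real.rpow_le_rpow_of_exponent_ge' hs (by linarith) hγ hγm
    calc |max (1 - s) 0 ^ lam - ∑ k ∈ Finset.range (m + 1), c k * s ^ k|
        ≤ C₁ * s ^ (m + 1) := by rw [max_eq_left (by linarith)]; exact hC₁ s ⟨hs, hs2⟩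
      _ ≤ max C₁ C₂ * s ^ (m + 1) := by gcongr; exact le_max_left _ _
      _ ≤ max C₁ C₂ * s ^ γ :=
          mul_le_mul_of_nonneg_left hpow ((le_max_right _ _).trans' (by positivity))
  · have hone : max (1 - s) 0 ^ lam ≤ (2 * s) ^ γ :=
      (Real.rpow_le_one (le_max_right _ _) (max_le (by linarith) zero_le_one) hlam).trans
        (Real.one_le_rpow (by linarith) hγ)
    have hterm : ∀ k ∈ Finset.range (m + 1), |c k * s ^ k| ≤ |c k| * (2 * s) ^ γ := fun k hk => by
      rw [abs_mul, abs_of_nonneg (by positivity : (0 : ℝ) ≤ s ^ k)]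
      exact mul_le_mul_of_nonneg_left (pow_le_two_mul_rpow hs2.le <|
        (Nat.cast_le.2 (Nat.lt_succ_iff.1 (Finset.mem_range.1 hk))).trans hmγ) (abs_nonneg _)
    calc |max (1 - s) 0 ^ lam - ∑ k ∈ Finset.range (m + 1), c k * s ^ k|
        ≤ |max (1 - s) 0 ^ lam| + ∑ k ∈ Finset.range (m + 1), |c k * s ^ k| :=
          (abs_sub _ _).trans (add_le_add le_rfl (Finset.abs_sum_le_sum_abs _ _))
      _ ≤ (2 * s) ^ γ + ∑ k ∈ Finset.range (m + 1), |c k| * (2 * s) ^ γ := by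
          rw [abs_of_nonneg (by positivity)]
          exact add_le_add hone (Finset.sum_le_sum hterm)
      _ = C₂ * s ^ γ := by rw [← Finset.sum_mul, Real.mul_rpow zero_le_two hs]; ring
      _ ≤ max C₁ C₂ * s ^ γ := by gcongr; exact le_max_right _ _

theorem exists_abs_max_sub_rpow_sub_sum_le {lam γ : ℝ} {m : ℕ} (hlam : 0 ≤ lam)
    (hmγ : (m : ℝ) ≤ γ) (hγm : γ ≤ m + 1) :
    ∃ (c : ℕ → ℝ) (C : ℝ), ∀ u, 0 < u → ∀ w, 0 ≤ w →
      |max (u - w) 0 ^ lam - ∑ k ∈ Finset.range (m + 1), u ^ lam * c k / u ^ k * w ^ k|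
        ≤ C * u ^ (lam - γ) * w ^ γ := by
  obtain ⟨c, C, hC⟩ := exists_abs_max_one_sub_rpow_sub_sum_le hlam hmγ hγm
  refine ⟨c, C, fun u hu w hw => ?_⟩
  have hscale : max (u - w) 0 = u * max (1 - w / u) 0 := by
    rw [mul_max_of_nonneg _ _ hu.le, mul_sub, mul_one, mul_div_cancel₀ _ hu.ne', mul_zero]
  have hsum : ∑ k ∈ Finset.range (m + 1), u ^ lam * c k / u ^ k * w ^ k
      = u ^ lam * ∑ k ∈ Finset.range (m + 1), c k * (w / u) ^ k := by
    rw [Finset.mul_sum]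
    refine Finset.sum_congr rfl fun k _ => ?_
    rw [div_pow]; ring
  calc |max (u - w) 0 ^ lam - ∑ k ∈ Finset.range (m + 1), u ^ lam * c k / u ^ k * w ^ k|
      = u ^ lam * |max (1 - w / u) 0 ^ lam - ∑ k ∈ Finset.range (m + 1), c k * (w / u) ^ k| := by
        rw [hscale, Real.mul_rpow hu.le (le_max_right _ _), hsum, ← mul_sub, abs_mul,
          abs_of_nonneg (by positivity)]
    _ ≤ u ^ lam * (C * (w / u) ^ γ) := by
        gcongr; exact hC _ (div_nonneg hw hu.le)
    _ = C * u ^ (lam - γ) * w ^ γ := by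
        rw [Real.div_rpow hw hu.le, Real.rpow_sub hu]; ring

theorem integral_mul_sub_sum_sq_pow {μ : Measure ℝ} {ψ f : ℝ → ℝ} {m : ℕ} (a : ℕ → ℝ)
    (hf : Integrable (fun v => ψ v * f v) μ)
    (hint : ∀ k ≤ m, Integrable (fun v => (v ^ 2) ^ k * ψ v) μ)
    (hmom : ∀ k ≤ m, ∫ v, (v ^ 2) ^ k * ψ v ∂μ = 0) :
    ∫ v, ψ v * (f v - ∑ k ∈ Finset.range (m + 1), a k * (v ^ 2) ^ k) ∂μ = ∫ v, ψ v * f v ∂μ := by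
  have hrw : (fun v => ψ v * ∑ k ∈ Finset.range (m + 1), a k * (v ^ 2) ^ k)
      = fun v => ∑ k ∈ Finset.range (m + 1), a k * ((v ^ 2) ^ k * ψ v) := by
    ext v; rw [Finset.mul_sum]; exact Finset.sum_congr rfl fun k _ => by ring
  have hk : ∀ k ∈ Finset.range (m + 1), Integrable (fun v => a k * ((v ^ 2) ^ k * ψ v)) μ :=
    fun k hk => (hint k (Nat.lt_succ_iff.1 (Finset.mem_range.1 hk))).const_mul _
  have hpoly : ∫ v, ψ v * ∑ k ∈ Finset.range (m + 1), a k * (v ^ 2) ^ k ∂μ = 0 := by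
    rw [hrw, integral_finsetSum _ hk]
    refine Finset.sum_eq_zero fun k hk => ?_
    rw [integral_const_mul, hmom k (Nat.lt_succ_iff.1 (Finset.mem_range.1 hk)), mul_zero]
  simp_rw [mul_sub]
  rw [integral_sub hf (hrw ▸ integrable_finsetSum _ hk), hpoly, sub_zero]

theorem norm_max_sub_rpow_le {lam u w : ℝ} (hlam : 0 ≤ lam) (hu : 0 ≤ u) (hw : 0 ≤ w) :
    ‖max (u - w) 0 ^ lam‖ ≤ u ^ lam := by
  rw [Real.norm_of_nonneg (by positivity)]
  exact Real.rpow_le_rpow (le_max_right _ _) (max_le (by linarith) hu) hlam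

theorem integrable_mul_max_sub_sq_rpow {μ : Measure ℝ} {ψ : ℝ → ℝ} {lam u : ℝ} (hlam : 0 ≤ lam)
    (hu : 0 ≤ u) (hψ : Integrable ψ μ) :
    Integrable (fun v => ψ v * max (u - v ^ 2) 0 ^ lam) μ := by
  have hK : Continuous fun v : ℝ => max (u - v ^ 2) 0 ^ lam :=
    ((continuous_const.sub (continuous_pow 2)).max continuous_const).rpow_const
      fun _ => Or.inr hlam
  refine (hψ.norm.mul_const (u ^ lam)).mono' (hψ.1.mul hK.aestronglyMeasurable)
    (ae_of_all _ fun v => ?_)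
  rw [norm_mul]
  exact mul_le_mul_of_nonneg_left (norm_max_sub_rpow_le hlam hu (sq_nonneg v)) (norm_nonneg _)

theorem abs_integral_mul_max_sub_sq_rpow_le {μ : Measure ℝ} {ψ : ℝ → ℝ} {lam u : ℝ}
    (hlam : 0 ≤ lam) (hu : 0 ≤ u) (hψ : Integrable ψ μ) :
    |∫ v, ψ v * max (u - v ^ 2) 0 ^ lam ∂μ| ≤ (∫ v, |ψ v| ∂μ) * u ^ lam := by
  rw [← integral_mul_const (u ^ lam), ← Real.norm_eq_abs]
  refine norm_integral_le_of_norm_le (hψ.norm.mul_const _) (ae_of_all _ fun v => ?_)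
  rw [norm_mul]
  exact mul_le_mul_of_nonneg_left (norm_max_sub_rpow_le hlam hu (sq_nonneg v)) (norm_nonneg _)

theorem exists_abs_integral_mul_max_sub_sq_rpow_le {μ : Measure ℝ} {ψ : ℝ → ℝ} {lam γ : ℝ}
    {m : ℕ} (hlam : 0 ≤ lam) (hmγ : (m : ℝ) ≤ γ) (hγm : γ ≤ m + 1)
    (hγ : Integrable (fun v => (v ^ 2) ^ γ * ψ v) μ)
    (hint : ∀ k ≤ m, Integrable (fun v => (v ^ 2) ^ k * ψ v) μ)
    (hmom : ∀ k ≤ m, ∫ v, (v ^ 2) ^ k * ψ v ∂μ = 0) :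
    ∃ C, ∀ u, 0 < u → |∫ v, ψ v * max (u - v ^ 2) 0 ^ lam ∂μ| ≤ C * u ^ (lam - γ) := by
  obtain ⟨c, C, hC⟩ := exists_abs_max_sub_rpow_sub_sum_le hlam hmγ hγm
  have hψ : Integrable ψ μ := by simpa using hint 0 (Nat.zero_le m)
  refine ⟨C * ∫ v, |(v ^ 2) ^ γ * ψ v| ∂μ, fun u hu => ?_⟩
  rw [← integral_mul_sub_sum_sq_pow (fun k => u ^ lam * c k / u ^ k)
    (integrable_mul_max_sub_sq_rpow hlam hu.le hψ) hint hmom, mul_right_comm,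
    ← integral_const_mul (C * u ^ (lam - γ)), ← Real.norm_eq_abs]
  refine norm_integral_le_of_norm_le (hγ.norm.const_mul _) (ae_of_all _ fun v => ?_)
  have hw : 0 ≤ (v ^ 2) ^ γ := by positivity
  calc ‖ψ v * _‖
      = |max (u - v ^ 2) 0 ^ lam - ∑ k ∈ Finset.range (m + 1), u ^ lam * c k / u ^ k * (v ^ 2) ^ k|
        * |ψ v| := by rw [Real.norm_eq_abs, abs_mul, mul_comm]
    _ ≤ C * u ^ (lam - γ) * (v ^ 2) ^ γ * |ψ v| :=
        mul_le_mul_of_nonneg_right (hC u hu _ (sq_nonneg v)) (abs_nonneg _)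
    _ = C * u ^ (lam - γ) * |(v ^ 2) ^ γ * ψ v| := by rw [abs_mul, abs_of_nonneg hw]; ring

theorem fracB_add_one_eq {lam : ℝ} (hlam : lam ≠ 0) (ψ : ℝ → ℝ) (u : ℝ) :
    fracB (lam + 1) ψ u = 2 / Gamma (lam + 1) * ∫ v in Ioi 0, ψ v * max (u - v ^ 2) 0 ^ lam := by
  rw [fracB, add_sub_cancel_right, intervalIntegral.integral_of_le (sqrt_nonneg u),
    ← Ioi_inter_Iic, ← setIntegral_indicator measurableSet_Iic]
  congr 1
  refine setIntegral_congr_fun measurableSet_Ioi fun v (hv : 0 < v) => ?_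
  by_cases h : v ≤ √u
  · have : v ^ 2 ≤ u := (le_sqrt' hv).1 h
    rw [indicator_of_mem (mem_Iic.2 h), max_eq_left (by linarith)]
  · have : u < v ^ 2 := lt_of_not_ge fun h' => h ((le_sqrt' hv).2 h')
    rw [indicator_of_notMem (mt mem_Iic.1 h), max_eq_right (by linarith), zero_rpow hlam,
      mul_zero]

theorem measurable_integral_mul_max_sub_sq_rpow {ψ : ℝ → ℝ} (hψ : Measurable ψ) (lam : ℝ)
    (μ : Measure ℝ) [SFinite μ] :
    Measurable fun u => ∫ v, ψ v * max (u - v ^ 2) 0 ^ lam ∂μ := by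
  have h : Measurable fun p : ℝ × ℝ => ψ p.2 * max (p.1 - p.2 ^ 2) 0 ^ lam := by fun_prop
  exact h.stronglyMeasurable.integral_prod_right'.measurable

theorem integrableOn_Ioi_sq_rpow_mul {ψ : ℝ → ℝ} {β q : ℝ} (hψ : Measurable ψ) (hq : 0 ≤ q)
    (hqβ : 2 * q ≤ β) (h0 : IntegrableOn (fun s => |ψ s|) (Icc 0 1))
    (h1 : IntegrableOn (fun s => s ^ β * |ψ s|) (Ici 1)) :
    IntegrableOn (fun v => (v ^ 2) ^ q * ψ v) (Ioi 0) := by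
  have hmeas : AEStronglyMeasurable (fun v : ℝ => (v ^ 2) ^ q * ψ v) :=
    (by fun_prop : Measurable fun v : ℝ => (v ^ 2) ^ q * ψ v).aestronglyMeasurable
  rw [← Ioc_union_Ioi_eq_Ioi zero_le_one]
  refine IntegrableOn.union ?_ ?_
  · refine (h0.mono_set Ioc_subset_Icc_self).mono' hmeas.restrict
      (ae_restrict_of_forall_mem measurableSet_Ioc fun v hv => ?_)
    have hv2 : v ^ 2 ≤ 1 := by nlinarith [hv.1, hv.2]
    rw [norm_mul, Real.norm_of_nonneg (by positivity), Real.norm_eq_abs]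
    exact mul_le_of_le_one_left (abs_nonneg _) (Real.rpow_le_one (sq_nonneg v) hv2 hq)
  · refine (h1.mono_set Ioi_subset_Ici_self).mono' hmeas.restrict
      (ae_restrict_of_forall_mem measurableSet_Ioi fun v (hv : 1 < v) => ?_)
    have hpow : (v ^ 2) ^ q ≤ v ^ β := by
      rw [← Real.rpow_two, ← Real.rpow_mul (by linarith)]
      exact Real.rpow_le_rpow_of_exponent_le hv.le hqβ
    rw [norm_mul, Real.norm_of_nonneg (by positivity), Real.norm_eq_abs]
    exact mul_le_mul_of_nonneg_right hpow (abs_nonneg _)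

theorem integrableOn_Ioi_inv_mul_abs_of_le_rpow {f : ℝ → ℝ} {a b A B : ℝ}
    (hf : AEStronglyMeasurable f (volume.restrict (Ioi 0))) (ha : 0 < a) (hb : 0 < b)
    (h0 : ∀ u ∈ Ioc 0 1, |f u| ≤ A * u ^ a) (h1 : ∀ u ∈ Ioi 1, |f u| ≤ B * u ^ (-b)) :
    IntegrableOn (fun u => u⁻¹ * |f u|) (Ioi 0) := by
  have hmeas : AEStronglyMeasurable (fun u => u⁻¹ * |f u|) (volume.restrict (Ioi 0)) :=
    measurable_inv.aestronglyMeasurable.mul hf.norm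
  rw [← Ioc_union_Ioi_eq_Ioi zero_le_one]
  refine IntegrableOn.union ?_ ?_
  · refine ((intervalIntegral.intervalIntegrable_rpow' (by linarith : -1 < a - 1)).1.const_mul
      A).mono'
      (hmeas.mono_measure (Measure.restrict_mono Ioc_subset_Ioi_self le_rfl))
      (ae_restrict_of_forall_mem measurableSet_Ioc fun u hu => ?_)
    rw [Real.norm_of_nonneg (by have := hu.1; positivity), Real.rpow_sub hu.1, Real.rpow_one,
      mul_div_assoc', div_eq_inv_mul]
    exact mul_le_mul_of_nonneg_left (h0 u hu) (inv_nonneg.2 hu.1.le)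
  · refine ((integrableOn_Ioi_rpow_of_lt (by linarith : -b - 1 < -1) zero_lt_one).const_mul
      B).mono'
      (hmeas.mono_measure (Measure.restrict_mono (Ioi_subset_Ioi zero_le_one) le_rfl))
      (ae_restrict_of_forall_mem measurableSet_Ioi fun u (hu : 1 < u) => ?_)
    have hu0 : 0 < u := by linarith
    rw [Real.norm_of_nonneg (by positivity), Real.rpow_sub hu0, Real.rpow_one,
      mul_div_assoc', div_eq_inv_mul]
    exact mul_le_mul_of_nonneg_left (h1 u hu) (inv_nonneg.2 hu0.le)

theorem integral_Ioi_sq_pow_mul_eq_zero {lam : ℝ} (hlam : 0 ≤ lam) {ψ : ℝ → ℝ}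
    (hmom : ∀ j : ℕ, Even j → (j : ℝ) ≤ 2 * ⌊lam⌋ → ∫ s in Ici (0 : ℝ), s ^ (j : ℝ) * ψ s = 0)
    {k : ℕ} (hk : k ≤ ⌊lam⌋₊) :
    ∫ v in Ioi 0, (v ^ 2) ^ k * ψ v = 0 := by
  have hj : ((2 * k : ℕ) : ℝ) ≤ 2 * ⌊lam⌋ := by
    rw [← natCast_floor_eq_intCast_floor hlam]; push_cast; gcongr
  have := hmom (2 * k) (even_two_mul k) hj
  rw [integral_Ici_eq_integral_Ioi] at this
  simpa only [Real.rpow_natCast, pow_mul] using this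

theorem stmt_10 (lam : ℝ) (hlam : 0 < lam) (ψ : ℝ → ℝ) (hmeas : Measurable ψ)
    (β : ℝ) (hβ : 2 * lam < β)
    (hint1 : IntegrableOn (fun s => s ^ β * |ψ s|) (Set.Ici 1))
    (hint0 : IntegrableOn (fun s => |ψ s|) (Set.Icc 0 1))
    (hmom : ∀ j : ℕ, Even j → (j : ℝ) ≤ 2 * ⌊lam⌋ →
      ∫ s in Set.Ici (0:ℝ), s ^ (j : ℝ) * ψ s = 0) :
    IntegrableOn (fun u => u⁻¹ * |fracB (lam + 1) ψ u|) (Set.Ioi 0) := by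
  set m := ⌊lam⌋₊
  have hm : (m : ℝ) ≤ lam := Nat.floor_le hlam.le
  set η := min (m + 1 - lam) ((β - 2 * lam) / 2)
  have hη : 0 < η := lt_min (by linarith [Nat.lt_floor_add_one lam]) (by linarith)
  have hηm : η ≤ m + 1 - lam := min_le_left _ _
  have hηβ : η ≤ (β - 2 * lam) / 2 := min_le_right _ _
  have hint : ∀ q, 0 ≤ q → 2 * q ≤ β → IntegrableOn (fun v => (v ^ 2) ^ q * ψ v) (Ioi 0) :=
    fun q hq hqβ => integrableOn_Ioi_sq_rpow_mul hmeas hq hqβ hint0 hint1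
  have hpow : ∀ k ≤ m, IntegrableOn (fun v => (v ^ 2) ^ k * ψ v) (Ioi 0) := fun k hk => by
    have : (k : ℝ) ≤ m := by exact_mod_cast hk
    simpa using hint k (Nat.cast_nonneg k) (by linarith)
  have hψ : IntegrableOn ψ (Ioi 0) := by simpa using hpow 0 (Nat.zero_le m)
  obtain ⟨B, hB⟩ := exists_abs_integral_mul_max_sub_sq_rpow_le hlam.le (by linarith) (by linarith)
    (hint (lam + η) (by linarith) (by linarith)) hpow
    fun k hk => integral_Ioi_sq_pow_mul_eq_zero hlam.le hmom hk
  have hF := funext (fracB_add_one_eq hlam.ne' ψ)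
  refine integrableOn_Ioi_inv_mul_abs_of_le_rpow
    (A := |2 / Gamma (lam + 1)| * ∫ v in Ioi 0, |ψ v|) (B := |2 / Gamma (lam + 1)| * B)
    (hF ▸ (measurable_integral_mul_max_sub_sq_rpow hmeas lam _).const_mul _).aestronglyMeasurable
    hlam hη (fun u hu => ?_) (fun u hu => ?_) <;> rw [hF, abs_mul, mul_assoc]
  · exact mul_le_mul_of_nonneg_left (abs_integral_mul_max_sub_sq_rpow_le hlam.le hu.1.le hψ)
      (abs_nonneg _)
  · rw [show -η = lam - (lam + η) by ring]
    exact mul_le_mul_of_nonneg_left (hB u (zero_lt_one.trans hu)) (abs_nonneg _)
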